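/- Let y, g ∈ ℝⁿ satisfy the angle condition (3/4)·‖g‖² ≤ ⟨g, ∇f(y)⟩. Then for every step size η ∈ (0, 1/(4L)], one has f(y − 2η·g) ≤ f(y) − η·‖g‖². -/

import Mathlib

open scoped RealInnerProductSpace

/-! The descent lemma `f (x + v) ≤ f x + ⟪∇f x, v⟫ + (L/2)‖v‖²` for an `L`-smooth `f`, applied with
`v = -2ηg`, bounds `f (y - 2ηg)` by `f y - 2η⟪g, ∇f y⟫ + 2Lη²‖g‖²`; the angle condition turns the
linear term into `-(3/2)η‖g‖²`, and `Lη ≤ 1/4` makes the quadratic term at most `(1/2)η‖g‖²`. -/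

section DescentLemma

variable {E : Type*} [NormedAddCommGroup E] [InnerProductSpace ℝ E] [CompleteSpace E]
  {f : E → ℝ}

theorem Differentiable.hasDerivAt_comp_add_smul (hf : Differentiable ℝ f) (x v : E) (t : ℝ) :
    HasDerivAt (fun s : ℝ => f (x + s • v)) ⟪gradient f (x + t • v), v⟫ t := by
  have hline : HasDerivAt (fun s : ℝ => x + s • v) v t := by
    simpa using ((hasDerivAt_id t).smul_const v).const_add x
  exact (hf _).hasGradientAt.hasFDerivAt.comp_hasDerivAt t hline

/- No integration needed: `t ↦ f (x + t • v) - t ⟪∇f x, v⟫ - (L/2) t² ‖v‖²` has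
nonpositive derivative on `t ≥ 0`, so its value at `1` is at most its value at `0`. -/
theorem Differentiable.apply_add_le_of_lipschitz_gradient (hf : Differentiable ℝ f) {L : ℝ}
    (hlip : ∀ x x', ‖gradient f x - gradient f x'‖ ≤ L * ‖x - x'‖) (x v : E) :
    f (x + v) ≤ f x + ⟪gradient f x, v⟫ + L / 2 * ‖v‖ ^ 2 := by
  set φ : ℝ → ℝ := fun t => f (x + t • v) - t * ⟪gradient f x, v⟫ - L / 2 * t ^ 2 * ‖v‖ ^ 2
  set φ' : ℝ → ℝ := fun t =>
    ⟪gradient f (x + t • v), v⟫ - ⟪gradient f x, v⟫ - L * t * ‖v‖ ^ 2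
  have hφ : ∀ t, HasDerivAt φ (φ' t) t := fun t => by
    refine (((hf.hasDerivAt_comp_add_smul x v t).sub ((hasDerivAt_id t).mul_const
      ⟪gradient f x, v⟫)).sub (((hasDerivAt_pow 2 t).const_mul (L / 2)).mul_const
      (‖v‖ ^ 2))).congr_deriv ?_
    simp only [φ']
    ring
  have hφ'_nonpos : ∀ t ∈ interior (Set.Ici (0 : ℝ)), φ' t ≤ 0 := by
    intro t ht
    rw [interior_Ici, Set.mem_Ioi] at ht
    have hgrad : ‖gradient f (x + t • v) - gradient f x‖ ≤ L * (t * ‖v‖) := by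
      simpa [norm_smul, abs_of_pos ht] using hlip (x + t • v) x
    calc φ' t = ⟪gradient f (x + t • v) - gradient f x, v⟫ - L * t * ‖v‖ ^ 2 := by
          simp only [φ', inner_sub_left]
      _ ≤ ‖gradient f (x + t • v) - gradient f x‖ * ‖v‖ - L * t * ‖v‖ ^ 2 := by
          gcongr; exact real_inner_le_norm _ _
      _ ≤ L * (t * ‖v‖) * ‖v‖ - L * t * ‖v‖ ^ 2 := by gcongr
      _ = 0 := by ring
  have hanti : AntitoneOn φ (Set.Ici 0) :=
    antitoneOn_of_hasDerivWithinAt_nonpos (convex_Ici 0)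
      (fun t _ => (hφ t).continuousAt.continuousWithinAt)
      (fun t _ => (hφ t).hasDerivWithinAt) hφ'_nonpos
  have h10 : φ 1 ≤ φ 0 := hanti Set.self_mem_Ici (Set.mem_Ici.mpr zero_le_one) zero_le_one
  simp only [φ, one_smul, zero_smul, add_zero] at h10
  linarith

end DescentLemma

theorem nsa_stmt_10_general (n : ℕ)
    (f : EuclideanSpace ℝ (Fin n) → ℝ)
    (hdiff : Differentiable ℝ f)
    (L : ℝ)
    (hlip : ∀ x x' : EuclideanSpace ℝ (Fin n),
      ‖gradient f x - gradient f x'‖ ≤ L * ‖x - x'‖)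
    (y g : EuclideanSpace ℝ (Fin n))
    (hangle : (3 / 4) * ‖g‖ ^ 2 ≤ ⟪g, gradient f y⟫)
    (η : ℝ) (hη0 : 0 < η) (hη : η ≤ 1 / (4 * L)) :
    f (y - (2 * η) • g) ≤ f y - η * ‖g‖ ^ 2 := by
  have hL : 0 < L := by linarith [one_div_pos.mp (hη0.trans_le hη)]
  have hηL : L * η ≤ 1 / 4 := by
    rw [le_div_iff₀ (by positivity)] at hη
    linarith
  have hdescent := hdiff.apply_add_le_of_lipschitz_gradient hlip y (-((2 * η) • g))
  rw [← sub_eq_add_neg, inner_neg_right, real_inner_smul_right, real_inner_comm, norm_neg,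
    norm_smul, Real.norm_of_nonneg (by positivity)] at hdescent
  have hquad : L / 2 * (2 * η * ‖g‖) ^ 2 ≤ η / 2 * ‖g‖ ^ 2 :=
    calc L / 2 * (2 * η * ‖g‖) ^ 2 = 2 * η * (L * η) * ‖g‖ ^ 2 := by ring
      _ ≤ 2 * η * (1 / 4) * ‖g‖ ^ 2 := by gcongr
      _ = η / 2 * ‖g‖ ^ 2 := by ring
  linarith [mul_le_mul_of_nonneg_left hangle (by positivity : (0 : ℝ) ≤ 2 * η)]

/-- If `g` satisfies the angle condition `(3/4)‖g‖² ≤ ⟨g, ∇f(y)⟩`, then for any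
step size `η ∈ (0, 1/(4L)]`, `f (y - 2η g) ≤ f y - η ‖g‖²`. -/
theorem nsa_stmt_10 (n : ℕ) (hn : 1 ≤ n)
    (f : EuclideanSpace ℝ (Fin n) → ℝ)
    (hdiff : Differentiable ℝ f)
    (L : ℝ) (hL : 0 < L)
    (hlip : ∀ x x' : EuclideanSpace ℝ (Fin n),
      ‖gradient f x - gradient f x'‖ ≤ L * ‖x - x'‖)
    (y g : EuclideanSpace ℝ (Fin n))
    (hangle : (3 / 4) * ‖g‖ ^ 2 ≤ ⟪g, gradient f y⟫)
    (η : ℝ) (hη0 : 0 < η) (hη : η ≤ 1 / (4 * L)) :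
    f (y - (2 * η) • g) ≤ f y - η * ‖g‖ ^ 2 :=
  nsa_stmt_10_general n f hdiff L hlip y g hangle η hη0 hη
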